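/- arXiv:2010.15000 — 7 statements merged into one kernel-verified Lean document; each statement's English description precedes it below -/
import Mathlib

section
/- Let D1 and D2 be disjoint Jordan regions in the plane whose boundaries are strictly convex Jordan curves. Then the intersection of the boundaries ∂D1 ∩ ∂D2 contains at most one point. -/
/-- A Jordan curve: homeomorphic image of the circle, given by a continuous
1-periodic parametrization injective on a fundamental domain. -/
def IsJordanCurve (C : Set ℂ) : Prop :=
  ∃ γ : ℝ → ℂ, Function.Periodic γ 1 ∧ Continuous γ ∧
    Set.InjOn γ (Set.Ico 0 1) ∧ Set.range γ = C

/-- A Jordan region: a bounded open connected set whose boundary is a Jordan curve. -/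
def IsJordanRegion (D : Set ℂ) : Prop :=
  IsOpen D ∧ IsConnected D ∧ Bornology.IsBounded D ∧ IsJordanCurve (frontier D)

/-- The boundary curve of `D` is convex: the segment between any two of its points
lies in the closed region it bounds. -/
def HasConvexBoundary (D : Set ℂ) : Prop := Convex ℝ (closure D)

/-- A set contains no nondegenerate line segment. -/
def NoSegment (C : Set ℂ) : Prop :=
  ∀ x ∈ C, ∀ y ∈ C, x ≠ y → ¬ segment ℝ x y ⊆ C

theorem stmt0 (D1 D2 : Set ℂ) (h1 : IsJordanRegion D1) (h2 : IsJordanRegion D2)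
    (hc1 : HasConvexBoundary D1) (hc2 : HasConvexBoundary D2)
    (hs1 : NoSegment (frontier D1)) (hs2 : NoSegment (frontier D2))
    (hdisj : Disjoint D1 D2) :
    (frontier D1 ∩ frontier D2).Subsingleton := by
  intro x hx y hy
  by_contra hne
  apply hs1 x hx.1 y hy.1 hne
  intro z hz
  have hz1 : z ∈ closure D1 :=
    hc1.segment_subset (frontier_subset_closure hx.1) (frontier_subset_closure hy.1) hz
  have hz2 : z ∈ closure D2 :=
    hc2.segment_subset (frontier_subset_closure hx.2) (frontier_subset_closure hy.2) hz
  have hzn1 : z ∉ D1 := by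
    intro hzD1
    obtain ⟨w, hw1, hw2⟩ := mem_closure_iff.mp hz2 D1 h1.1 hzD1
    exact Set.disjoint_left.mp hdisj hw1 hw2
  rw [h1.1.frontier_eq]
  exact ⟨hz1, hzn1⟩
end

section
/- Let {D_i} be a countable collection of pairwise disjoint, M-Ahlfors 2-regular Jordan regions in the plane, and suppose D̄_i intersects both circles ∂B(x,r) and ∂B(x,R) with r < R. Then Area(D_i ∩ (B(x,R) \ B(x,r))) ≥ c(R−r)², where c > 0 depends only on M. -/
/-- `D` is `M`-Ahlfors 2-regular. -/
def AhlforsTwoRegular (M : ℝ) (D : Set ℂ) : Prop :=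
  ∀ p ∈ closure D, ∀ r : ℝ, 0 < r → r ≤ Metric.diam D →
    M * r ^ 2 ≤ (MeasureTheory.volume (Metric.ball p r ∩ D)).toReal

theorem stmt5 (M : ℝ) (hM : 0 < M) :
    ∃ c > 0, ∀ (D : ℕ → Set ℂ),
      (∀ i, IsJordanRegion (D i)) → (∀ i, AhlforsTwoRegular M (D i)) →
      Pairwise (Function.onFun Disjoint D) →
      ∀ (i : ℕ) (x : ℂ) (r R : ℝ), 0 < r → r < R →
        (closure (D i) ∩ Metric.sphere x r).Nonempty →
        (closure (D i) ∩ Metric.sphere x R).Nonempty →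
        c * (R - r) ^ 2 ≤
          (MeasureTheory.volume (D i ∩ (Metric.ball x R \ Metric.ball x r))).toReal := by
  refine ⟨M / 4, by positivity, fun D hJ hA _ i x r R hr hrR ha hb => ?_⟩
  obtain ⟨a, haD, haS⟩ := ha
  obtain ⟨b, hbD, hbS⟩ := hb
  rw [Metric.mem_sphere] at haS hbS
  have hconn : IsConnected (closure (D i)) := (hJ i).2.1.closure
  -- intermediate value: find p with dist p x = (r+R)/2
  have hcont : ContinuousOn (fun y => dist y x) (closure (D i)) :=
    (continuous_id.dist continuous_const).continuousOn
  have hiv := hconn.isPreconnected.intermediate_value haD hbD hcont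
  have hmem : (r + R) / 2 ∈ Set.Icc (dist a x) (dist b x) := by
    rw [haS, hbS]; constructor <;> linarith
  obtain ⟨p, hpD, hp⟩ := hiv hmem
  simp only at hp
  set ρ := (R - r) / 2 with hρ
  have hρpos : 0 < ρ := by rw [hρ]; linarith
  -- diam bound
  have hdiam : ρ ≤ Metric.diam (D i) := by
    have hb1 : Bornology.IsBounded (closure (D i)) := (hJ i).2.2.1.closure
    have h1 : dist a b ≤ Metric.diam (closure (D i)) :=
      Metric.dist_le_diam_of_mem hb1 haD hbD
    have h2 : |dist b x - dist a x| ≤ dist b a := abs_dist_sub_le b a x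
    rw [Metric.diam_closure] at h1
    rw [haS, hbS] at h2
    rw [dist_comm] at h2
    have := abs_le.mp (by simpa using h2)
    linarith [this.1, this.2]
  have hball := hA i p hpD ρ hρpos hdiam
  -- ball p ρ ∩ D i ⊆ D i ∩ annulus
  have hsub : Metric.ball p ρ ∩ D i ⊆ D i ∩ (Metric.ball x R \ Metric.ball x r) := by
    rintro y ⟨hy1, hy2⟩
    rw [Metric.mem_ball] at hy1
    refine ⟨hy2, ?_, ?_⟩
    · rw [Metric.mem_ball]
      have := dist_triangle y p x
      rw [hp] at this
      linarith
    · rw [Metric.mem_ball]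
      have := dist_triangle p y x
      rw [hp, dist_comm p y] at this
      push_neg
      linarith
  have hfin : MeasureTheory.volume (D i ∩ (Metric.ball x R \ Metric.ball x r)) ≠ ⊤ := by
    have hsub2 : D i ∩ (Metric.ball x R \ Metric.ball x r) ⊆ Metric.ball x R :=
      fun y hy => hy.2.1
    exact ((MeasureTheory.measure_mono hsub2).trans_lt MeasureTheory.measure_ball_lt_top).ne
  have hmono : (MeasureTheory.volume (Metric.ball p ρ ∩ D i)).toReal ≤
      (MeasureTheory.volume (D i ∩ (Metric.ball x R \ Metric.ball x r))).toReal :=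
    ENNReal.toReal_mono hfin (MeasureTheory.measure_mono hsub)
  have : M / 4 * (R - r) ^ 2 = M * ρ ^ 2 := by rw [hρ]; ring
  linarith
end

section
/- Let {D_i}_{i∈ℕ} be pairwise disjoint, M-Ahlfors 2-regular Jordan regions and E a compact set. There is a constant K > 0 depending only on M such that for every c > 0, the number of indices i with D_i ∩ E ≠ ∅ and diam(D_i) ≥ c·diam(E) is at most K(c⁻² + 1). -/
/-!
Put `r = c · diam E` and pick `pᵢ ∈ Dᵢ ∩ E` for every counted index. Ahlfors regularity gives
`Area(B(pᵢ, r) ∩ Dᵢ) ≥ M r²`; these pieces are pairwise disjoint and all lie in the disk of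
radius `diam E + r` around a fixed point of `E`, so there are at most
`π (diam E + r)² / (M r²) ≤ 2π (c⁻² + 1) / M` of them.
If `diam E = 0`, then `E` has at most one point and meets at most one `Dᵢ`.
-/

open MeasureTheory Set Metric ENNReal Real

section Packing

variable {α ι : Type*} [MeasurableSpace α] {μ : Measure α} {A : ι → Set α} {B : Set α}
  {m : ℝ≥0∞}

theorem Finset.card_mul_le_measure_of_pairwiseDisjoint {S : Finset ι}
    (hA : ∀ i ∈ S, NullMeasurableSet (A i) μ) (hdisj : (S : Set ι).PairwiseDisjoint A)
    (hsub : ∀ i ∈ S, A i ⊆ B) (hvol : ∀ i ∈ S, m ≤ μ (A i)) : S.card * m ≤ μ B :=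
  calc (S.card : ℝ≥0∞) * m = ∑ _i ∈ S, m := by rw [Finset.sum_const, nsmul_eq_mul]
    _ ≤ ∑ i ∈ S, μ (A i) := Finset.sum_le_sum hvol
    _ = μ (⋃ i ∈ S, A i) := (measure_biUnion_finset₀ hdisj.aedisjoint hA).symm
    _ ≤ μ B := measure_mono (iUnion₂_subset hsub)

theorem Set.finite_and_ncard_mul_le_measure_of_pairwiseDisjoint {N : Set ι} (hm : m ≠ 0)
    (hB : μ B ≠ ∞) (hA : ∀ i ∈ N, NullMeasurableSet (A i) μ) (hdisj : N.PairwiseDisjoint A)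
    (hsub : ∀ i ∈ N, A i ⊆ B) (hvol : ∀ i ∈ N, m ≤ μ (A i)) :
    N.Finite ∧ N.ncard * m ≤ μ B := by
  have hcard (S : Finset ι) (hS : ↑S ⊆ N) : S.card * m ≤ μ B :=
    Finset.card_mul_le_measure_of_pairwiseDisjoint (fun i hi => hA i (hS hi))
      (hdisj.subset hS) (fun i hi => hsub i (hS hi)) (fun i hi => hvol i (hS hi))
  have hfin : N.Finite := by
    by_contra hinf
    obtain ⟨n, hn⟩ := ENNReal.exists_nat_mul_gt hm hB
    obtain ⟨S, hSN, rfl⟩ := Set.Infinite.exists_subset_card_eq hinf n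
    exact (hcard S hSN).not_gt hn
  refine ⟨hfin, ?_⟩
  rw [ncard_eq_toFinset_card N hfin]
  exact hcard _ (by rw [hfin.coe_toFinset])

end Packing

theorem Set.Subsingleton.subsingleton_setOf_inter_nonempty {α ι : Type*} {D : ι → Set α}
    (hdisj : Pairwise (Function.onFun Disjoint D)) {E : Set α} (hE : E.Subsingleton) :
    {i | (D i ∩ E).Nonempty}.Subsingleton := by
  rintro i ⟨x, hxD, hxE⟩ j ⟨y, hyD, hyE⟩
  by_contra hij
  exact (hdisj hij).ne_of_mem hxD hyD (hE hxE hyE)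

theorem Complex.volume_ball_eq_ofReal (a : ℂ) {r : ℝ} (hr : 0 ≤ r) :
    volume (ball a r) = ENNReal.ofReal (π * r ^ 2) := by
  rw [Complex.volume_ball, ← ENNReal.ofReal_pow hr, mul_comm, ENNReal.ofReal_mul pi_pos.le,
    ← NNReal.coe_real_pi, ofReal_coe_nnreal]

theorem AhlforsTwoRegular.ofReal_le_volume_ball_inter {M : ℝ} {D : Set ℂ}
    (hD : AhlforsTwoRegular M D) {p : ℂ} (hp : p ∈ D) {r : ℝ} (hr : 0 < r)
    (hrD : r ≤ diam D) : ENNReal.ofReal (M * r ^ 2) ≤ volume (ball p r ∩ D) :=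
  ENNReal.ofReal_le_of_le_toReal (hD p (subset_closure hp) r hr hrD)

theorem AhlforsTwoRegular.finite_and_ncard_mul_le {ι : Type*} {M : ℝ} (hM : 0 < M)
    {D : ι → Set ℂ} (hmeas : ∀ i, MeasurableSet (D i)) (hA : ∀ i, AhlforsTwoRegular M (D i))
    (hdisj : Pairwise (Function.onFun Disjoint D)) {E : Set ℂ} (hE : Bornology.IsBounded E)
    {x₀ : ℂ} (hx₀ : x₀ ∈ E) {r : ℝ} (hr : 0 < r) :
    {i | (D i ∩ E).Nonempty ∧ r ≤ diam (D i)}.Finite ∧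
      {i | (D i ∩ E).Nonempty ∧ r ≤ diam (D i)}.ncard * (M * r ^ 2) ≤ π * (diam E + r) ^ 2 := by
  set N := {i | (D i ∩ E).Nonempty ∧ r ≤ diam (D i)}
  choose! p hp using fun i (hi : i ∈ N) => hi.1
  have hpacking := Set.finite_and_ncard_mul_le_measure_of_pairwiseDisjoint (μ := volume)
    (A := fun i => ball (p i) r ∩ D i) (B := ball x₀ (diam E + r)) (N := N)
    (ofReal_pos.2 (by positivity)).ne' measure_ball_lt_top.ne
    (fun i _ => (measurableSet_ball.inter (hmeas i)).nullMeasurableSet)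
    (fun i _ j _ hij => (hdisj hij).mono inter_subset_right inter_subset_right)
    (fun i hi => inter_subset_left.trans <| ball_subset_ball' <| by
      linarith [dist_le_diam_of_mem hE (hp i hi).2 hx₀])
    (fun i hi => (hA i).ofReal_le_volume_ball_inter (hp i hi).1 hr hi.2)
  refine ⟨hpacking.1, ?_⟩
  have hcount := hpacking.2
  rw [Complex.volume_ball_eq_ofReal _ (by linarith [diam_nonneg (s := E)]), ← ofReal_natCast,
    ← ENNReal.ofReal_mul (by positivity), ENNReal.ofReal_le_ofReal_iff (by positivity)] at hcount
  exact hcount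

theorem stmt7 (M : ℝ) (hM : 0 < M) :
    ∃ K > 0, ∀ (D : ℕ → Set ℂ),
      (∀ i, IsJordanRegion (D i)) → (∀ i, AhlforsTwoRegular M (D i)) →
      Pairwise (Function.onFun Disjoint D) →
      ∀ (E : Set ℂ), IsCompact E → ∀ c : ℝ, 0 < c →
        {i : ℕ | (D i ∩ E).Nonempty ∧ c * Metric.diam E ≤ Metric.diam (D i)}.Finite ∧
        (({i : ℕ | (D i ∩ E).Nonempty ∧ c * Metric.diam E ≤ Metric.diam (D i)}.ncard : ℝ)
          ≤ K * (c⁻¹ ^ 2 + 1)) := by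
  refine ⟨2 * π / M + 1, by positivity, fun D hJ hA hdisj E hE c hc => ?_⟩
  set N := {i : ℕ | (D i ∩ E).Nonempty ∧ c * diam E ≤ diam (D i)}
  rcases (diam_nonneg (s := E)).eq_or_lt with hd | hd
  · have hN : N.Subsingleton :=
      (Set.Subsingleton.subsingleton_setOf_inter_nonempty hdisj fun x hx y hy =>
        dist_le_zero.1 (hd ▸ dist_le_diam_of_mem hE.isBounded hx hy)).anti fun i hi => hi.1
    refine ⟨hN.finite, ?_⟩
    calc (N.ncard : ℝ) ≤ 1 := by exact_mod_cast (ncard_le_one hN.finite).2 hN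
      _ ≤ (2 * π / M + 1) * (c⁻¹ ^ 2 + 1) :=
        one_le_mul_of_one_le_of_one_le (le_add_of_nonneg_left (by positivity))
          (le_add_of_nonneg_left (by positivity))
  · obtain ⟨x₀, hx₀⟩ : E.Nonempty := nonempty_iff_ne_empty.2 fun h => by simp [h] at hd
    obtain ⟨hfin, hcount⟩ := AhlforsTwoRegular.finite_and_ncard_mul_le hM
      (fun i => (hJ i).1.measurableSet) hA hdisj hE.isBounded hx₀ (mul_pos hc hd)
    refine ⟨hfin, ?_⟩
    set d := diam E
    calc (N.ncard : ℝ) ≤ π * (d + c * d) ^ 2 / (M * (c * d) ^ 2) :=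
          (le_div_iff₀ (by positivity)).2 hcount
      _ ≤ 2 * π / M * (c⁻¹ ^ 2 + 1) := by
          rw [div_le_iff₀ (by positivity)]
          field_simp
          nlinarith [sq_nonneg (1 - c)]
      _ ≤ (2 * π / M + 1) * (c⁻¹ ^ 2 + 1) := by gcongr; linarith
end

section
/- Let {D_i}_{i∈ℕ} be pairwise disjoint, M-Ahlfors 2-regular Jordan regions, and let E be the segment [0,l]×{0}. Suppose there is c > 0 with diam(D_i) ≤ c·l and dist(D_i, E) ≤ c·diam(D_i) for all i. Then there is K > 0 depending only on c and M such that for every s ∈ (1,2], the sum over i of diam(D_i)^s is at most K·l^s/(s−1). -/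
open MeasureTheory
open scoped ENNReal

/-- Distance between two sets in the plane. -/
noncomputable def setDist (A B : Set ℂ) : ℝ :=
  sInf {d : ℝ | ∃ a ∈ A, ∃ b ∈ B, d = dist a b}

lemma volume_reProdIm' (s t : Set ℝ) (hs : MeasurableSet s) (ht : MeasurableSet t) :
    volume (s ×ℂ t) = volume s * volume t := by
  have h1 : Complex.measurableEquivRealProd ⁻¹' (s ×ˢ t) = s ×ℂ t := by
    ext z; simp [Complex.mem_reProdIm]
  rw [← h1, Complex.volume_preserving_equiv_real_prod.measure_preimage
      (hs.prod ht).nullMeasurableSet, Measure.volume_eq_prod, Measure.prod_prod]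

lemma two_rpow_bound {t : ℝ} (h0 : 0 < t) (h1 : t ≤ 1) : t/4 ≤ 1 - (2:ℝ) ^ (-t) := by
  have hlog : (1:ℝ)/2 ≤ Real.log 2 := by nlinarith [Real.log_two_gt_d9]
  have h2t : (1:ℝ) + t/2 ≤ (2:ℝ)^t := by
    rw [Real.rpow_def_of_pos two_pos]
    nlinarith [Real.add_one_le_exp (Real.log 2 * t)]
  have h2t2 : (2:ℝ)^t ≤ 2 := by
    calc (2:ℝ)^t ≤ (2:ℝ)^(1:ℝ) := Real.rpow_le_rpow_of_exponent_le one_le_two h1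
    _ = 2 := Real.rpow_one 2
  have hpos : (0:ℝ) < (2:ℝ)^t := Real.rpow_pos_of_pos two_pos t
  rw [Real.rpow_neg (by norm_num) t]
  have heq : 1 - ((2:ℝ)^t)⁻¹ = ((2:ℝ)^t - 1)/(2:ℝ)^t := by field_simp
  rw [heq, le_div_iff₀ hpos]
  nlinarith

lemma pow_alg {c l : ℝ} (s : ℝ) (hcl : 0 < c * l) (k : ℕ) :
    (2:ℝ)^k * (c*l/2^k) ^ s = (c*l)^s * ((2:ℝ)^(-(s-1)))^k := by
  have h2k : (0:ℝ) < 2^k := by positivity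
  calc (2:ℝ)^k * (c*l/2^k)^s
      = (c*l)^s * ((2:ℝ)^(k:ℝ) * (2:ℝ)^(-((k:ℝ)*s))) := by
        rw [Real.div_rpow hcl.le h2k.le, ← Real.rpow_natCast 2 k,
          ← Real.rpow_mul two_pos.le, Real.rpow_neg two_pos.le ((k:ℝ)*s)]
        ring_nf
    _ = (c*l)^s * (2:ℝ)^((k:ℝ) + -((k:ℝ)*s)) := by rw [Real.rpow_add two_pos]
    _ = (c*l)^s * ((2:ℝ)^(-(s-1)))^k := by
        rw [← Real.rpow_natCast ((2:ℝ)^(-(s-1))) k, ← Real.rpow_mul two_pos.le]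
        congr 1
        ring

lemma exists_dyadic {x : ℝ} (hx : 1 ≤ x) : ∃ k : ℕ, (2:ℝ)^k ≤ x ∧ x < 2^(k+1) := by
  obtain ⟨n, hn1, hn2⟩ := exists_mem_Ico_zpow (show (0:ℝ) < x by linarith) one_lt_two
  have hn0 : 0 ≤ n := by
    by_contra h
    push_neg at h
    have : n + 1 ≤ 0 := by omega
    have : (2:ℝ)^(n+1) ≤ (2:ℝ)^(0:ℤ) := zpow_le_zpow_right₀ one_le_two this
    rw [zpow_zero] at this
    linarith
  refine ⟨n.toNat, ?_, ?_⟩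
  · have : ((2:ℝ))^(n.toNat : ℤ) = 2^n := by rw [Int.toNat_of_nonneg hn0]
    rw [← zpow_natCast (2:ℝ) n.toNat, this]
    exact hn1
  · have : ((2:ℝ))^((n.toNat + 1 : ℕ) : ℤ) = 2^(n+1) := by
      push_cast
      rw [Int.toNat_of_nonneg hn0]
    rw [← zpow_natCast (2:ℝ) (n.toNat+1), this]
    exact hn2

theorem stmt8 (M c : ℝ) (hM : 0 < M) (hc : 0 < c) :
    ∃ K > 0, ∀ (D : ℕ → Set ℂ) (l : ℝ), 0 < l →
      (∀ i, IsJordanRegion (D i)) → (∀ i, AhlforsTwoRegular M (D i)) →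
      Pairwise (Function.onFun Disjoint D) →
      (∀ i, Metric.diam (D i) ≤ c * l) →
      (∀ i, setDist (D i) {z : ℂ | z.im = 0 ∧ z.re ∈ Set.Icc 0 l}
        ≤ c * Metric.diam (D i)) →
      ∀ s : ℝ, s ∈ Set.Ioc (1:ℝ) 2 →
        ∑' i : ℕ, Metric.diam (D i) ^ s ≤ K * l ^ s / (s - 1) := by
  set A : ℝ := 2*(c+2)*(1+2*c*(c+2)) with hA
  set B : ℝ := 4*A/(M*c) with hB
  have hA0 : 0 < A := by rw [hA]; positivity
  have hB0 : 0 < B := by rw [hB, hA]; positivity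
  clear_value A
  clear_value B
  have hmax : (1:ℝ) ≤ max c 1 := le_max_right c 1
  have hmax0 : (0:ℝ) < max c 1 := by linarith
  refine ⟨16*A*(max c 1)^2/(M*c),
    div_pos (mul_pos (by linarith) (pow_pos hmax0 2)) (by positivity), ?_⟩
  intro D l hl hJ hAhl hdisj hdiam hdist s hs
  obtain ⟨hs1, hs2⟩ := hs
  set K : ℝ := 16*A*(max c 1)^2/(M*c) with hK
  have hK0 : 0 < K := by
    rw [hK]
    exact div_pos (mul_pos (by linarith) (pow_pos hmax0 2)) (by positivity)
  clear_value K
  set t : ℝ := s - 1 with htdef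
  have ht0 : 0 < t := by rw [htdef]; linarith
  have ht1 : t ≤ 1 := by rw [htdef]; linarith
  clear_value t
  have hs0 : (0:ℝ) ≤ s := by linarith
  have hcl : 0 < c * l := by positivity
  have hRHS0 : 0 ≤ K * l ^ s / (s - 1) := by
    apply div_nonneg _ (by linarith)
    exact mul_nonneg hK0.le (Real.rpow_nonneg hl.le s)
  -- basic facts
  have hd0 : ∀ i, 0 ≤ Metric.diam (D i) := fun i => Metric.diam_nonneg
  have hbd : ∀ i, Bornology.IsBounded (D i) := fun i => (hJ i).2.2.1
  have hne : ∀ i, (D i).Nonempty := fun i => (hJ i).2.1.nonempty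
  have hmeas : ∀ i, MeasurableSet (D i) := fun i => (hJ i).1.measurableSet
  -- volume lower bound
  have hvol : ∀ i, 0 < Metric.diam (D i) →
      ENNReal.ofReal (M * Metric.diam (D i) ^ 2) ≤ volume (D i) := by
    intro i hdi
    obtain ⟨p, hp⟩ := hne i
    have h1 := hAhl i p (subset_closure hp) (Metric.diam (D i)) hdi le_rfl
    have h2 : volume (Metric.ball p (Metric.diam (D i)) ∩ D i) ≤ volume (D i) :=
      measure_mono Set.inter_subset_right
    have hfin : volume (D i) ≠ ⊤ := (hbd i).measure_lt_top.ne
    refine ENNReal.ofReal_le_of_le_toReal (h1.trans ?_)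
    exact ENNReal.toReal_mono hfin h2
  -- nearest segment point
  have hball : ∀ i, 0 < Metric.diam (D i) → ∃ x : ℝ, x ∈ Set.Icc 0 l ∧
      ∀ z ∈ D i, dist z (x : ℂ) ≤ (c+2) * Metric.diam (D i) := by
    intro i hdi
    set S : Set ℝ := {d : ℝ | ∃ a ∈ D i, ∃ b ∈ {z : ℂ | z.im = 0 ∧ z.re ∈ Set.Icc 0 l}, d = dist a b} with hS
    have hSne : S.Nonempty := by
      obtain ⟨a, ha⟩ := hne i
      exact ⟨dist a (0:ℂ), a, ha, 0, ⟨by simp, by simp [le_of_lt hl]⟩, rfl⟩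
    have hSbdd : BddBelow S := by
      refine ⟨0, ?_⟩
      rintro d ⟨a, _, b, _, rfl⟩
      exact dist_nonneg
    have hlt : sInf S < c * Metric.diam (D i) + Metric.diam (D i) := by
      have := hdist i
      rw [setDist, ← hS] at this
      linarith
    obtain ⟨d0, hd0S, hd0lt⟩ := (csInf_lt_iff hSbdd hSne).1 hlt
    obtain ⟨a, haD, b, ⟨hbim, hbre⟩, rfl⟩ := hd0S
    refine ⟨b.re, hbre, fun z hz => ?_⟩
    have hb : (b.re : ℂ) = b := Complex.ext (by simp) (by simp [hbim])
    rw [hb]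
    calc dist z b ≤ dist z a + dist a b := dist_triangle z a b
      _ ≤ Metric.diam (D i) + (c * Metric.diam (D i) + Metric.diam (D i)) := by
          have := Metric.dist_le_diam_of_mem (hbd i) hz haD
          linarith
      _ = (c+2) * Metric.diam (D i) := by ring
  -- dyadic classes
  set Sk : ℕ → Set ℕ :=
    fun k => {i | c*l/2^(k+1) < Metric.diam (D i) ∧ Metric.diam (D i) ≤ c*l/2^k} with hSk
  -- coverage
  have hcov : ∀ i, 0 < Metric.diam (D i) → ∃ k, i ∈ Sk k := by
    intro i hdi
    have hx : 1 ≤ c*l/Metric.diam (D i) := (one_le_div hdi).2 (hdiam i)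
    obtain ⟨k, hk1, hk2⟩ := exists_dyadic hx
    refine ⟨k, ?_, ?_⟩
    · rw [div_lt_iff₀ (by positivity)]
      rw [div_lt_iff₀ hdi] at hk2
      linarith [hk2]
    · rw [le_div_iff₀ (by positivity)]
      rw [le_div_iff₀ hdi] at hk1
      linarith [hk1]
  -- cardinality bound
  have hcard : ∀ k, ∀ F : Finset ℕ, ↑F ⊆ Sk k → (F.card : ℝ) ≤ B * 2^k := by
    intro k F hF
    set e : ℝ := c*l/2^k with he
    have he0 : 0 < e := by rw [he]; positivity
    have hecl : e ≤ c*l := by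
      rw [he]
      exact div_le_self hcl.le (one_le_pow₀ one_le_two)
    clear_value e
    set w : ℝ := (c+2)*e with hw
    have hw0 : 0 < w := by rw [hw]; exact mul_pos (by linarith) he0
    clear_value w
    -- containment
    have hsub : ∀ i ∈ F, D i ⊆ Set.Icc (-w) (l+w) ×ℂ Set.Icc (-w) w := by
      intro i hiF
      obtain ⟨hi1, hi2⟩ := hF hiF
      have hdi : 0 < Metric.diam (D i) := lt_of_le_of_lt (by positivity) hi1
      obtain ⟨x, ⟨hx0, hxl⟩, hxball⟩ := hball i hdi
      intro z hz
      have hdz : dist z (x:ℂ) ≤ w := by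
        calc dist z (x:ℂ) ≤ (c+2) * Metric.diam (D i) := hxball z hz
          _ ≤ (c+2) * e := by nlinarith
          _ = w := hw.symm
      have hre : |z.re - x| ≤ w := by
        have h1 : |(z - (x:ℂ)).re| ≤ ‖z - (x:ℂ)‖ := Complex.abs_re_le_norm _
        rw [Complex.sub_re, Complex.ofReal_re] at h1
        rw [Complex.dist_eq] at hdz
        linarith
      have him : |z.im| ≤ w := by
        have h1 : |(z - (x:ℂ)).im| ≤ ‖z - (x:ℂ)‖ := Complex.abs_im_le_norm _
        rw [Complex.sub_im, Complex.ofReal_im, sub_zero] at h1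
        rw [Complex.dist_eq] at hdz
        linarith
      rw [abs_le] at hre him
      exact Complex.mem_reProdIm.2 ⟨⟨by linarith [hre.1], by linarith [hre.2]⟩,
        ⟨him.1, him.2⟩⟩
    -- volume of rectangle
    have hrect : volume (Set.Icc (-w) (l+w) ×ℂ Set.Icc (-w) w) ≤ ENNReal.ofReal (A*l*e) := by
      rw [volume_reProdIm' _ _ measurableSet_Icc measurableSet_Icc, Real.volume_Icc,
        Real.volume_Icc, ← ENNReal.ofReal_mul (by linarith)]
      apply ENNReal.ofReal_le_ofReal
      rw [hA, hw]
      nlinarith [mul_le_mul_of_nonneg_left hecl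
        (mul_nonneg (show (0:ℝ) ≤ 4*(c+2)^2 by positivity) he0.le), he0, hecl]
    -- counting
    have hchain : (F.card : ℝ≥0∞) * ENNReal.ofReal (M * (e/2)^2) ≤ ENNReal.ofReal (A*l*e) := by
      calc (F.card : ℝ≥0∞) * ENNReal.ofReal (M * (e/2)^2)
          = ∑ _i ∈ F, ENNReal.ofReal (M * (e/2)^2) := by
            rw [Finset.sum_const, nsmul_eq_mul]
        _ ≤ ∑ i ∈ F, volume (D i) := by
            apply Finset.sum_le_sum
            intro i hiF
            obtain ⟨hi1, hi2⟩ := hF hiF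
            have hdi : 0 < Metric.diam (D i) := lt_of_le_of_lt (by positivity) hi1
            refine le_trans ?_ (hvol i hdi)
            apply ENNReal.ofReal_le_ofReal
            have heq2 : e/2 = c*l/2^(k+1) := by rw [he]; ring
            rw [← heq2] at hi1
            nlinarith [mul_le_mul_of_nonneg_left
              (mul_self_le_mul_self (half_pos he0).le hi1.le) hM.le]
        _ = volume (⋃ i ∈ F, D i) := by
            rw [measure_biUnion_finset ?_ (fun i _ => hmeas i)]
            intro i _ j _ hij
            exact hdisj hij
        _ ≤ volume (Set.Icc (-w) (l+w) ×ℂ Set.Icc (-w) w) := by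
            apply measure_mono
            exact Set.iUnion₂_subset hsub
        _ ≤ ENNReal.ofReal (A*l*e) := hrect
    have hreal : (F.card : ℝ) * (M * (e/2)^2) ≤ A*l*e := by
      have h1 : ENNReal.ofReal ((F.card : ℝ) * (M * (e/2)^2)) ≤ ENNReal.ofReal (A*l*e) := by
        rw [ENNReal.ofReal_mul (by positivity), ENNReal.ofReal_natCast]
        exact hchain
      exact (ENNReal.ofReal_le_ofReal_iff
        (mul_nonneg (mul_nonneg hA0.le hl.le) he0.le)).1 h1
    -- conclude
    have h2k : (0:ℝ) < 2^k := by positivity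
    have hcle : e * 2^k = c * l := by rw [he]; field_simp
    have h3 : (F.card:ℝ) * M * e * e ≤ 4*A*l*e := by nlinarith [hreal]
    have h4 : (F.card:ℝ) * M * e ≤ 4*A*l := le_of_mul_le_mul_right h3 he0
    have h5 : (F.card:ℝ) * (M*c) * l ≤ (4*A*2^k)*l := by
      have : (F.card:ℝ) * (M*c) * l = ((F.card:ℝ) * M * e) * 2^k := by
        linear_combination (F.card:ℝ) * M * hcle.symm
      rw [this]
      calc ((F.card:ℝ) * M * e) * 2^k ≤ (4*A*l) * 2^k :=
            mul_le_mul_of_nonneg_right h4 h2k.le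
        _ = (4*A*2^k)*l := by ring
    have h6 : (F.card:ℝ) * (M*c) ≤ 4*A*2^k := le_of_mul_le_mul_right h5 hl
    rw [hB, div_mul_eq_mul_div, le_div_iff₀ (by positivity)]
    linarith
  -- finiteness of classes
  have hfin : ∀ k, (Sk k).Finite := by
    intro k
    by_contra hinf
    have hinf' : (Sk k).Infinite := hinf
    obtain ⟨F, hFsub, hFcard⟩ := hinf'.exists_subset_card_eq (⌊B*2^k⌋₊ + 1)
    have h1 := hcard k F hFsub
    rw [hFcard] at h1
    push_cast at h1
    have h2 : B * 2^k < (⌊B*2^k⌋₊ : ℝ) + 1 := Nat.lt_floor_add_one _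
    linarith
  set g : ℕ → ℝ≥0∞ := fun i => ENNReal.ofReal (Metric.diam (D i) ^ s) with hg
  set r : ℝ≥0∞ := ENNReal.ofReal ((2:ℝ)^(-(s-1))) with hr
  -- per-class bound
  have hsumk : ∀ k, ∑' i, (Sk k).indicator g i ≤ ENNReal.ofReal (B*(c*l)^s) * r^k := by
    intro k
    have hfs : ∀ i ∉ (hfin k).toFinset, (Sk k).indicator g i = 0 := by
      intro i hi
      rw [Set.Finite.mem_toFinset] at hi
      exact Set.indicator_of_notMem hi g
    rw [tsum_eq_sum hfs]
    calc ∑ i ∈ (hfin k).toFinset, (Sk k).indicator g i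
        ≤ ∑ _i ∈ (hfin k).toFinset, ENNReal.ofReal ((c*l/2^k)^s) := by
          apply Finset.sum_le_sum
          intro i hi
          rw [Set.Finite.mem_toFinset] at hi
          rw [Set.indicator_of_mem hi]
          exact ENNReal.ofReal_le_ofReal (Real.rpow_le_rpow (hd0 i) hi.2 hs0)
      _ = ((hfin k).toFinset.card : ℝ≥0∞) * ENNReal.ofReal ((c*l/2^k)^s) := by
          rw [Finset.sum_const, nsmul_eq_mul]
      _ ≤ ENNReal.ofReal (B*2^k) * ENNReal.ofReal ((c*l/2^k)^s) := by
          apply mul_le_mul_left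
          rw [← ENNReal.ofReal_natCast]
          exact ENNReal.ofReal_le_ofReal (hcard k _ (fun i hi => (Set.Finite.mem_toFinset _).1 hi))
      _ = ENNReal.ofReal (B*(c*l)^s) * r^k := by
          rw [← ENNReal.ofReal_mul (mul_nonneg hB0.le (by positivity)), hr,
            ← ENNReal.ofReal_pow (by positivity),
            ← ENNReal.ofReal_mul (mul_nonneg hB0.le (Real.rpow_nonneg hcl.le s))]
          congr 1
          rw [show B*2^k*(c*l/2^k)^s = B*(2^k*(c*l/2^k)^s) by ring, pow_alg s hcl k]
          ring
  -- pointwise domination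
  have hle : ∀ i, g i ≤ ∑' k, (Sk k).indicator g i := by
    intro i
    rcases eq_or_lt_of_le (hd0 i) with h | h
    · have : g i = 0 := by
        simp only [hg]
        rw [← h, Real.zero_rpow (ne_of_gt (by linarith : (0:ℝ) < s))]
        simp
      rw [this]
      exact zero_le
    · obtain ⟨k, hk⟩ := hcov i h
      calc g i = (Sk k).indicator g i := (Set.indicator_of_mem hk g).symm
        _ ≤ ∑' k, (Sk k).indicator g i := ENNReal.le_tsum k
  -- geometric series bound
  have hrlt : r ≤ ENNReal.ofReal (1 - t/4) := by
    rw [hr]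
    apply ENNReal.ofReal_le_ofReal
    have := two_rpow_bound ht0 ht1
    rw [← htdef]
    linarith
  have hgeom : (1 - r)⁻¹ ≤ ENNReal.ofReal (4/t) := by
    have h1 : ENNReal.ofReal (1 - (2:ℝ)^(-t)) = 1 - r := by
      rw [hr, ← htdef, ENNReal.ofReal_sub _ (by positivity), ENNReal.ofReal_one]
    have hx0 : 0 < 1 - (2:ℝ)^(-t) := lt_of_lt_of_le (by linarith) (two_rpow_bound ht0 ht1)
    rw [← h1, ← ENNReal.ofReal_inv_of_pos hx0]
    apply ENNReal.ofReal_le_ofReal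
    have h4t : (0:ℝ) < t/4 := by linarith
    calc (1 - (2:ℝ)^(-t))⁻¹ ≤ (t/4)⁻¹ := by
          apply inv_anti₀ h4t (two_rpow_bound ht0 ht1)
      _ = 4/t := by rw [inv_div]
  -- final constant bound
  have hcs : c^s ≤ (max c 1)^2 := by
    calc c^s ≤ (max c 1)^s := Real.rpow_le_rpow hc.le (le_max_left c 1) hs0
      _ ≤ (max c 1)^(2:ℝ) := Real.rpow_le_rpow_of_exponent_le hmax hs2
      _ = (max c 1)^(2:ℕ) := by rw [← Real.rpow_natCast (max c 1) 2]; norm_num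
  have hfinal : B*(c*l)^s * (4/t) ≤ K * l^s / t := by
    rw [Real.mul_rpow hc.le hl.le]
    have hfac : (0:ℝ) ≤ 4*B*(l^s)/t :=
      div_nonneg (mul_nonneg (by linarith) (Real.rpow_nonneg hl.le s)) ht0.le
    have h1 : B*(c^s*l^s) * (4/t) = (4*B*l^s/t) * c^s := by
      ring
    have h2 : K * l^s / t = (4*B*l^s/t) * (max c 1)^2 := by
      rw [hK, hB]
      ring
    rw [h1, h2]
    exact mul_le_mul_of_nonneg_left hcs hfac
  -- assemble in ℝ≥0∞
  have hmain : ∑' i, g i ≤ ENNReal.ofReal (K * l^s / (s-1)) := by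
    calc ∑' i, g i ≤ ∑' i, ∑' k, (Sk k).indicator g i := ENNReal.tsum_le_tsum hle
      _ = ∑' k, ∑' i, (Sk k).indicator g i := ENNReal.tsum_comm
      _ ≤ ∑' k, ENNReal.ofReal (B*(c*l)^s) * r^k := ENNReal.tsum_le_tsum hsumk
      _ = ENNReal.ofReal (B*(c*l)^s) * ∑' k, r^k := ENNReal.tsum_mul_left
      _ = ENNReal.ofReal (B*(c*l)^s) * (1-r)⁻¹ := by rw [ENNReal.tsum_geometric]
      _ ≤ ENNReal.ofReal (B*(c*l)^s) * ENNReal.ofReal (4/t) := mul_le_mul_right hgeom _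
      _ = ENNReal.ofReal (B*(c*l)^s * (4/t)) := (ENNReal.ofReal_mul
            (mul_nonneg hB0.le (Real.rpow_nonneg hcl.le s))).symm
      _ ≤ ENNReal.ofReal (K * l^s / (s-1)) := by
          apply ENNReal.ofReal_le_ofReal
          rw [← htdef]
          exact hfinal
  -- back to ℝ
  rw [htdef]
  by_cases hsum : Summable (fun i => Metric.diam (D i) ^ s)
  · have h1 : ENNReal.ofReal (∑' i, Metric.diam (D i) ^ s) = ∑' i, g i :=
      ENNReal.ofReal_tsum_of_nonneg (fun i => Real.rpow_nonneg (hd0 i) s) hsum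
    exact (ENNReal.ofReal_le_ofReal_iff hRHS0).1 (h1 ▸ hmain)
  · rw [tsum_eq_zero_of_not_summable hsum]
    exact hRHS0
end

section
/- Let 0 < s−1 < 1 and let I(1),…,I(w) be the quantities with ℓ_in(1), ℓ_out(1), ℓ_in(w), ℓ_out(w) ≥ 0, lengths ℓ(2),…,ℓ(w−1) ≥ 0, and ℓ ≥ max{ℓ_in(1), ℓ_in(w)}. If L1 ≤ ℓ_out(1) and L2 ≤ ℓ_out(w), then (ℓ_in(1)+ℓ_out(1))^{s−1} + ℓ(2)^{s−1} + ⋯ + ℓ(w−1)^{s−1} + (ℓ_in(w)+ℓ_out(w))^{s−1} − (ℓ_out(1)+ℓ+ℓ_out(w))^{s−1} ≥ L1^{s−1} + L2^{s−1} − (L1+ℓ+L2)^{s−1}. -/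
open Real

lemma rpow_diff_antitone (p : ℝ) (hp0 : 0 < p) (hp1 : p < 1) {c : ℝ} (hc : 0 ≤ c) :
    AntitoneOn (fun t : ℝ => (t + c) ^ p - t ^ p) (Set.Ici 0) := by
  have hcont : Continuous fun x : ℝ => x ^ p :=
    continuous_iff_continuousAt.2 fun x => Real.continuousAt_rpow_const x p (Or.inr hp0.le)
  have hderiv : ∀ t ∈ interior (Set.Ici (0:ℝ)),
      HasDerivAt (fun t : ℝ => (t + c) ^ p - t ^ p)
        (p * (t + c) ^ (p - 1) * 1 - p * t ^ (p - 1)) t := by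
    intro t ht
    rw [interior_Ici] at ht
    have ht0 : (0:ℝ) < t := ht
    have h1 : HasDerivAt (fun t : ℝ => (t + c) ^ p) (p * (t + c) ^ (p - 1) * 1) t := by
      have hne : t + c ≠ 0 := by positivity
      exact (Real.hasDerivAt_rpow_const (Or.inl hne)).comp t
        ((hasDerivAt_id t).add_const c)
    have h2 : HasDerivAt (fun t : ℝ => t ^ p) (p * t ^ (p - 1)) t :=
      Real.hasDerivAt_rpow_const (Or.inl ht0.ne')
    exact h1.sub h2
  refine antitoneOn_of_deriv_nonpos (convex_Ici 0) ?_ ?_ ?_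
  · exact ((hcont.comp (continuous_id.add continuous_const)).sub hcont).continuousOn
  · intro t ht
    exact (hderiv t ht).differentiableAt.differentiableWithinAt
  · intro t ht
    rw [(hderiv t ht).deriv]
    rw [interior_Ici] at ht
    have h3 : (t + c) ^ (p - 1) ≤ t ^ (p - 1) :=
      Real.rpow_le_rpow_of_nonpos ht (le_add_of_nonneg_right hc) (by linarith)
    nlinarith [h3, hp0.le]

lemma rpow_diff_le (p : ℝ) (hp0 : 0 < p) (hp1 : p < 1) {a b c : ℝ} (ha : 0 ≤ a)
    (hab : a ≤ b) (hc : 0 ≤ c) : (b + c) ^ p - b ^ p ≤ (a + c) ^ p - a ^ p :=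
  rpow_diff_antitone p hp0 hp1 hc ha (ha.trans hab) hab

theorem stmt11 (s lin1 lout1 linw loutw l L1 L2 : ℝ)
    (hs : s - 1 ∈ Set.Ioo (0:ℝ) 1)
    (hin1 : 0 ≤ lin1) (hout1 : 0 ≤ lout1) (hinw : 0 ≤ linw) (houtw : 0 ≤ loutw)
    (hl1 : lin1 ≤ l) (hlw : linw ≤ l)
    (F : Finset ℕ) (lmid : ℕ → ℝ) (hmid : ∀ j ∈ F, 0 ≤ lmid j)
    (hL1 : 0 ≤ L1) (hL1' : L1 ≤ lout1) (hL2 : 0 ≤ L2) (hL2' : L2 ≤ loutw) :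
    L1 ^ (s - 1) + L2 ^ (s - 1) - (L1 + l + L2) ^ (s - 1) ≤
      (lin1 + lout1) ^ (s - 1) + (∑ j ∈ F, lmid j ^ (s - 1)) + (linw + loutw) ^ (s - 1)
        - (lout1 + l + loutw) ^ (s - 1) := by
  obtain ⟨hp0, hp1⟩ := hs
  set p := s - 1 with hp
  have hl : 0 ≤ l := hin1.trans hl1
  have hsum : 0 ≤ ∑ j ∈ F, lmid j ^ p :=
    Finset.sum_nonneg fun j hj => Real.rpow_nonneg (hmid j hj) p
  have h1 : lout1 ^ p ≤ (lin1 + lout1) ^ p :=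
    Real.rpow_le_rpow hout1 (le_add_of_nonneg_left hin1) hp0.le
  have h2 : loutw ^ p ≤ (linw + loutw) ^ p :=
    Real.rpow_le_rpow houtw (le_add_of_nonneg_left hinw) hp0.le
  -- step a : increase L1 to lout1
  have ha : (lout1 + (l + L2)) ^ p - lout1 ^ p ≤ (L1 + (l + L2)) ^ p - L1 ^ p :=
    rpow_diff_le p hp0 hp1 hL1 hL1' (by linarith)
  -- step b : increase L2 to loutw
  have hb : (loutw + (lout1 + l)) ^ p - loutw ^ p ≤ (L2 + (lout1 + l)) ^ p - L2 ^ p :=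
    rpow_diff_le p hp0 hp1 hL2 hL2' (by linarith)
  have e1 : L1 + (l + L2) = L1 + l + L2 := by ring
  have e2 : lout1 + (l + L2) = L2 + (lout1 + l) := by ring
  have e3 : loutw + (lout1 + l) = lout1 + l + loutw := by ring
  rw [e1, e2] at ha
  rw [e3] at hb
  linarith
end

section
/- Let f_n: (a,b) → ℝ be a sequence of convex differentiable functions converging pointwise to f: (a,b) → ℝ. Then f is convex, and for each c ∈ (a,b) and ε > 0 there exist δ > 0 and N ∈ ℕ such that for all n ≥ N, |f_n'(c+δ) − f'_+(c)| < ε and |f_n'(c−δ) − f'_−(c)| < ε, where f'_± denote the one-sided derivatives of f at c. -/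
/-!
Convexity passes to pointwise limits. A convex `f` differentiable at `x` satisfies
`slope f u x ≤ f' x ≤ slope f x y` for `u < x < y`, and slopes converge when the functions do.
Take `u = c` and `x = c + δ`: the lower slope of the limit `g` is already `≥ g'₊(c)`, and the
upper slope `slope g (c + δ) y` is within `ε` of `g'₊(c)` once `y` is close to `c` and then `δ`
is small, by continuity of `g` at `c`. The left side is symmetric.
-/

open Set Filter Topology

theorem ConvexOn.of_tendsto {ι E : Type*} [AddCommGroup E] [Module ℝ E] {l : Filter ι}
    [l.NeBot] {s : Set E} {f : ι → E → ℝ} {g : E → ℝ} (hf : ∀ᶠ i in l, ConvexOn ℝ s (f i))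
    (hlim : ∀ x ∈ s, Tendsto (fun i => f i x) l (𝓝 (g x))) : ConvexOn ℝ s g := by
  obtain ⟨i, hi⟩ := hf.exists
  refine ⟨hi.1, fun x hx y hy p q hp hq hpq => ?_⟩
  exact le_of_tendsto_of_tendsto (hlim _ (hi.1 hx hy hp hq hpq))
    (((hlim x hx).const_smul p).add ((hlim y hy).const_smul q))
    (hf.mono fun j hj => hj.2 hx hy hp hq hpq)

theorem ConvexOn.exists_slope_lt_rightDeriv_add {S : Set ℝ} {g : ℝ → ℝ} {c ε : ℝ}
    (hg : ConvexOn ℝ S g) (hc : c ∈ interior S) (hε : 0 < ε) :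
    ∃ y ∈ S, c < y ∧ ∀ᶠ x in 𝓝 c, slope g x y < derivWithin g (Ioi c) c + ε := by
  have hlim := (hasDerivWithinAt_iff_tendsto_slope' self_notMem_Ioi).1
    (hg.hasDerivWithinAt_rightDeriv_of_mem_interior hc)
  have hS : ∀ᶠ y in 𝓝[>] c, y ∈ S :=
    mem_nhdsWithin_of_mem_nhds (mem_interior_iff_mem_nhds.1 hc)
  obtain ⟨y, ⟨hyS, hcy⟩, hy⟩ := ((hS.and self_mem_nhdsWithin).and
    (hlim.eventually_lt_const (lt_add_of_pos_right _ hε))).exists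
  have hgc : ContinuousAt g c :=
    hg.continuousOn_interior.continuousAt (isOpen_interior.mem_nhds hc)
  have hslope : ContinuousAt (fun x => slope g x y) c := by
    simp only [slope_def_field]
    exact (continuousAt_const.sub hgc).div (continuousAt_const.sub continuousAt_id)
      (sub_ne_zero.2 (ne_of_gt hcy))
  exact ⟨y, hyS, hcy, hslope.eventually_lt continuousAt_const hy⟩

theorem ConvexOn.exists_leftDeriv_sub_lt_slope {S : Set ℝ} {g : ℝ → ℝ} {c ε : ℝ}
    (hg : ConvexOn ℝ S g) (hc : c ∈ interior S) (hε : 0 < ε) :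
    ∃ y ∈ S, y < c ∧ ∀ᶠ x in 𝓝 c, derivWithin g (Iio c) c - ε < slope g y x := by
  have hlim := (hasDerivWithinAt_iff_tendsto_slope' self_notMem_Iio).1
    (hg.hasDerivWithinAt_leftDeriv_of_mem_interior hc)
  have hS : ∀ᶠ y in 𝓝[<] c, y ∈ S :=
    mem_nhdsWithin_of_mem_nhds (mem_interior_iff_mem_nhds.1 hc)
  obtain ⟨y, ⟨hyS, hyc⟩, hy⟩ := ((hS.and self_mem_nhdsWithin).and
    (hlim.eventually_const_lt (sub_lt_self _ hε))).exists
  have hgc : ContinuousAt g c :=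
    hg.continuousOn_interior.continuousAt (isOpen_interior.mem_nhds hc)
  have hslope : ContinuousAt (fun x => slope g y x) c := by
    simp only [slope_def_field]
    exact (hgc.sub continuousAt_const).div (continuousAt_id.sub continuousAt_const)
      (sub_ne_zero.2 (ne_of_gt hyc))
  rw [slope_comm] at hy
  exact ⟨y, hyS, hyc, continuousAt_const.eventually_lt hslope hy⟩

theorem eventually_deriv_mem_Ioo_of_tendsto {ι : Type*} {l : Filter ι} {S : Set ℝ}
    {f : ι → ℝ → ℝ} {g : ℝ → ℝ} {u x y A B : ℝ} (hconv : ∀ i, ConvexOn ℝ S (f i))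
    (hdiff : ∀ i, DifferentiableAt ℝ (f i) x)
    (hlim : ∀ z ∈ S, Tendsto (fun i => f i z) l (𝓝 (g z)))
    (hu : u ∈ S) (hx : x ∈ S) (hy : y ∈ S) (hux : u < x) (hxy : x < y)
    (hA : A < slope g u x) (hB : slope g x y < B) :
    ∀ᶠ i in l, deriv (f i) x ∈ Ioo A B := by
  have hslope : ∀ z ∈ S, ∀ w ∈ S,
      Tendsto (fun i => slope (f i) z w) l (𝓝 (slope g z w)) := by
    intro z hz w hw
    simp only [slope_def_field]
    exact ((hlim w hw).sub (hlim z hz)).div_const _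
  filter_upwards [(hslope u hu x hx).eventually_const_lt hA,
    (hslope x hx y hy).eventually_lt_const hB] with i hAi hBi
  exact ⟨hAi.trans_le ((hconv i).slope_le_deriv hu hx hux (hdiff i)),
    ((hconv i).deriv_le_slope hx hy hxy (hdiff i)).trans_lt hBi⟩

theorem stmt13_general (a b : ℝ) (f : ℕ → ℝ → ℝ) (g : ℝ → ℝ)
    (hconv : ∀ n, ConvexOn ℝ (Set.Ioo a b) (f n))
    (hdiff : ∀ n, ∀ x ∈ Set.Ioo a b, DifferentiableAt ℝ (f n) x)
    (hptwise : ∀ x ∈ Set.Ioo a b,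
      Filter.Tendsto (fun n => f n x) Filter.atTop (nhds (g x))) :
    ConvexOn ℝ (Set.Ioo a b) g ∧
    ∀ c ∈ Set.Ioo a b, ∀ ε > 0, ∃ δ > 0,
      c + δ ∈ Set.Ioo a b ∧ c - δ ∈ Set.Ioo a b ∧
      ∃ N : ℕ, ∀ n ≥ N,
        |deriv (f n) (c + δ) - derivWithin g (Set.Ioi c) c| < ε ∧
        |deriv (f n) (c - δ) - derivWithin g (Set.Iio c) c| < ε := by
  have hg : ConvexOn ℝ (Ioo a b) g := .of_tendsto (.of_forall hconv) hptwise
  refine ⟨hg, fun c hc ε hε => ?_⟩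
  have hci : c ∈ interior (Ioo a b) := by rwa [interior_Ioo]
  set L := derivWithin g (Ioi c) c
  set M := derivWithin g (Iio c) c
  obtain ⟨yR, hyR, hcyR, hR⟩ := hg.exists_slope_lt_rightDeriv_add hci hε
  obtain ⟨yL, hyL, hyLc, hL⟩ := hg.exists_leftDeriv_sub_lt_slope hci hε
  have hnear : ∀ᶠ x in 𝓝 c, x ∈ Ioo a b ∧ yL < x ∧ x < yR :=
    (isOpen_Ioo.eventually_mem hc).and ((eventually_gt_nhds hyLc).and (eventually_lt_nhds hcyR))
  have hplus := ((continuous_const_add c).tendsto' 0 c (add_zero c)).eventually (hnear.and hR)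
  have hminus := ((continuous_sub_left c).tendsto' 0 c (sub_zero c)).eventually (hnear.and hL)
  obtain ⟨δ, ⟨⟨⟨hxS, -, hxR⟩, hslopeR⟩, ⟨⟨hzS, hzL, -⟩, hslopeL⟩⟩, hδ⟩ :=
    (((hplus.and hminus).filter_mono nhdsWithin_le_nhds).and
      (self_mem_nhdsWithin (s := Ioi (0 : ℝ)))).exists
  have hcx : c < c + δ := lt_add_of_pos_right c hδ
  have hzc : c - δ < c := sub_lt_self c hδ
  have hright := eventually_deriv_mem_Ioo_of_tendsto hconv (fun n => hdiff n _ hxS) hptwise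
    hc hxS hyR hcx hxR (A := L - ε) (B := L + ε)
    ((sub_lt_self L hε).trans_le (hg.rightDeriv_le_slope_of_mem_interior hci hxS hcx)) hslopeR
  have hleft := eventually_deriv_mem_Ioo_of_tendsto hconv (fun n => hdiff n _ hzS) hptwise
    hyL hzS hc hzL hzc (A := M - ε) (B := M + ε) hslopeL
    ((hg.slope_le_leftDeriv_of_mem_interior hzS hci hzc).trans_lt (lt_add_of_pos_right M hε))
  obtain ⟨N, hN⟩ := eventually_atTop.1 (hright.and hleft)
  refine ⟨δ, hδ, hxS, hzS, N, fun n hn => ?_⟩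
  obtain ⟨⟨hR₁, hR₂⟩, hL₁, hL₂⟩ := hN n hn
  exact ⟨abs_sub_lt_iff.2 ⟨by linarith, by linarith⟩,
    abs_sub_lt_iff.2 ⟨by linarith, by linarith⟩⟩

theorem stmt13 (a b : ℝ) (hab : a < b) (f : ℕ → ℝ → ℝ) (g : ℝ → ℝ)
    (hconv : ∀ n, ConvexOn ℝ (Set.Ioo a b) (f n))
    (hdiff : ∀ n, ∀ x ∈ Set.Ioo a b, DifferentiableAt ℝ (f n) x)
    (hptwise : ∀ x ∈ Set.Ioo a b,
      Filter.Tendsto (fun n => f n x) Filter.atTop (nhds (g x))) :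
    ConvexOn ℝ (Set.Ioo a b) g ∧
    ∀ c ∈ Set.Ioo a b, ∀ ε > 0, ∃ δ > 0,
      c + δ ∈ Set.Ioo a b ∧ c - δ ∈ Set.Ioo a b ∧
      ∃ N : ℕ, ∀ n ≥ N,
        |deriv (f n) (c + δ) - derivWithin g (Set.Ioi c) c| < ε ∧
        |deriv (f n) (c - δ) - derivWithin g (Set.Iio c) c| < ε :=
  stmt13_general a b f g hconv hdiff hptwise
end

section
/- If a set E ⊂ ℝ² has σ-finite 1-dimensional Hausdorff measure, then for almost every y ∈ ℝ (with respect to Lebesgue measure), the intersection of E with the horizontal line ℝ×{y} is at most countable. -/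
set_option maxHeartbeats 1000000

open MeasureTheory EMetric Set
open scoped ENNReal

private lemma lipschitz_im' : LipschitzWith 1 Complex.im := by
  intro z w
  rw [ENNReal.coe_one, one_mul, edist_dist, edist_dist]
  apply ENNReal.ofReal_le_ofReal
  rw [Complex.dist_eq, Real.dist_eq]
  simpa [Complex.sub_im] using Complex.abs_im_le_norm (z - w)

private lemma key16 (F : Set ℂ) (m : ℕ) (δ : ℝ) (hδ : 0 < δ) :
    (m : ℝ≥0∞) * MeasureTheory.volume {y : ℝ | ∃ p : Fin m → ℂ,
      (∀ i, p i ∈ F ∧ (p i).im = y) ∧ ∀ i j, i ≠ j → δ ≤ dist (p i) (p j)} ≤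
      (MeasureTheory.Measure.hausdorffMeasure 1 : MeasureTheory.Measure ℂ) F := by
  set μH := (MeasureTheory.Measure.hausdorffMeasure 1 : MeasureTheory.Measure ℂ)
  set A := {y : ℝ | ∃ p : Fin m → ℂ,
      (∀ i, p i ∈ F ∧ (p i).im = y) ∧ ∀ i j, i ≠ j → δ ≤ dist (p i) (p j)} with hA
  apply ENNReal.le_of_forall_pos_le_add
  intro ε hε htop
  -- get a cover at scale δ/2
  have hr : (0 : ℝ≥0∞) < ENNReal.ofReal (δ / 2) := by
    simp [ENNReal.ofReal_pos]; linarith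
  have h1 : (⨅ (t : ℕ → Set ℂ) (_ : F ⊆ ⋃ n, t n)
      (_ : ∀ n, diam (t n) ≤ ENNReal.ofReal (δ / 2)),
        ∑' n, ⨆ _ : (t n).Nonempty, diam (t n) ^ (1:ℝ)) ≤ μH F := by
    rw [show μH F = _ from Measure.hausdorffMeasure_apply 1 F]
    exact le_iSup₂ (f := fun r (_ : (0:ℝ≥0∞) < r) => ⨅ (t : ℕ → Set ℂ) (_ : F ⊆ ⋃ n, t n)
      (_ : ∀ n, diam (t n) ≤ r), ∑' n, ⨆ _ : (t n).Nonempty, diam (t n) ^ (1:ℝ))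
      (ENNReal.ofReal (δ / 2)) hr
  have h2 : (⨅ (t : ℕ → Set ℂ) (_ : F ⊆ ⋃ n, t n)
      (_ : ∀ n, diam (t n) ≤ ENNReal.ofReal (δ / 2)),
        ∑' n, ⨆ _ : (t n).Nonempty, diam (t n) ^ (1:ℝ)) < μH F + ε := by
    refine h1.trans_lt ?_
    exact ENNReal.lt_add_right htop.ne (by exact_mod_cast hε.ne')
  simp only [iInf_lt_iff] at h2
  obtain ⟨t, hcov, hdiam, ht⟩ := h2
  -- intervals
  set I : ℕ → Set ℝ := fun n => closure (Complex.im '' t n) with hI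
  have Imeas : ∀ n, MeasurableSet (I n) := fun n => isClosed_closure.measurableSet
  have Ivol : ∀ n, MeasureTheory.volume (I n) ≤ diam (t n) := by
    intro n
    refine (Real.volume_le_diam _).trans ?_
    rw [hI, diam_closure]
    simpa [EMetric.diam] using lipschitz_im'.ediam_image_le (t n)
  set f : ℝ → ℝ≥0∞ := fun y => ∑' n, (I n).indicator 1 y with hf
  have fmeas : Measurable f :=
    Measurable.ennreal_tsum fun n => measurable_const.indicator (Imeas n)
  have hAB : A ⊆ {y | (m : ℝ≥0∞) ≤ f y} := by
    rintro y ⟨p, hp, hsep⟩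
    have hpc : ∀ i, ∃ j, p i ∈ t j := by
      intro i
      have := hcov (hp i).1
      simpa using this
    choose g hg using hpc
    have ginj : Function.Injective g := by
      intro i j hij
      by_contra hne
      have h3 : edist (p i) (p j) ≤ diam (t (g i)) := edist_le_diam_of_mem (hg i) (hij ▸ hg j)
      have h4 : ENNReal.ofReal δ ≤ edist (p i) (p j) := by
        rw [edist_dist]
        exact ENNReal.ofReal_le_ofReal (hsep i j hne)
      have h5 : ENNReal.ofReal δ ≤ ENNReal.ofReal (δ / 2) :=
        h4.trans (h3.trans (hdiam (g i)))
      have : ENNReal.ofReal (δ / 2) < ENNReal.ofReal δ := by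
        rw [ENNReal.ofReal_lt_ofReal_iff hδ]; linarith
      exact absurd h5 (not_le.mpr this)
    have hyI : ∀ i, y ∈ I (g i) := by
      intro i
      exact subset_closure ⟨p i, hg i, (hp i).2⟩
    have : (m : ℝ≥0∞) ≤ ∑ j ∈ Finset.univ.image g, (I j).indicator (1 : ℝ → ℝ≥0∞) y := by
      have : ∀ j ∈ Finset.univ.image g, (I j).indicator (1 : ℝ → ℝ≥0∞) y = 1 := by
        intro j hj
        obtain ⟨i, -, rfl⟩ := Finset.mem_image.mp hj
        simp [indicator_of_mem (hyI i)]
      rw [Finset.sum_congr rfl this]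
      simp [Finset.card_image_of_injective _ ginj]
    exact this.trans (ENNReal.sum_le_tsum _)
  calc (m : ℝ≥0∞) * MeasureTheory.volume A
      ≤ (m : ℝ≥0∞) * MeasureTheory.volume {y | (m : ℝ≥0∞) ≤ f y} :=
        mul_le_mul_right (measure_mono hAB) _
    _ ≤ ∫⁻ y, f y := mul_meas_ge_le_lintegral fmeas _
    _ = ∑' n, MeasureTheory.volume (I n) := by
        simp only [hf]
        exact (lintegral_tsum fun n => (measurable_const.indicator (Imeas n)).aemeasurable).trans
          (tsum_congr fun n => lintegral_indicator_one (Imeas n))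
    _ ≤ ∑' n, ⨆ _ : (t n).Nonempty, diam (t n) ^ (1:ℝ) := by
        refine ENNReal.tsum_le_tsum fun n => ?_
        by_cases h : (t n).Nonempty
        · simp only [h, iSup_pos, ENNReal.rpow_one]
          exact Ivol n
        · rw [not_nonempty_iff_eq_empty] at h
          simp [hI, h]
    _ ≤ μH F + ε := ht.le

theorem stmt16 (E : Set ℂ)
    (hσ : ∃ F : ℕ → Set ℂ, E = ⋃ n, F n ∧ ∀ n,
      (MeasureTheory.Measure.hausdorffMeasure 1 : MeasureTheory.Measure ℂ) (F n) < ⊤) :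
    ∀ᵐ y : ℝ, (E ∩ {z : ℂ | z.im = y}).Countable := by
  obtain ⟨F, rfl, hF⟩ := hσ
  have key : ∀ n, ∀ᵐ y : ℝ, (F n ∩ {z : ℂ | z.im = y}).Countable := by
    intro n
    set G := F n with hG
    have hGfin := hF n
    rw [MeasureTheory.ae_iff]
    set A : ℕ → ℕ → Set ℝ := fun m k => {y : ℝ | ∃ p : Fin m → ℂ,
      (∀ i, p i ∈ G ∧ (p i).im = y) ∧ ∀ i j, i ≠ j → (1 : ℝ)/(k+1) ≤ dist (p i) (p j)} with hAdef
    have hsub : ∀ m, {y : ℝ | ¬(G ∩ {z : ℂ | z.im = y}).Countable} ⊆ ⋃ k, A m k := by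
      intro m y hy
      simp only [mem_setOf_eq] at hy
      have hinf : (G ∩ {z : ℂ | z.im = y}).Infinite := fun h => hy h.countable
      obtain ⟨s, hs, hcard⟩ := hinf.exists_subset_card_eq m
      have e := s.equivFinOfCardEq hcard
      set p : Fin m → ℂ := fun i => (e.symm i : ℂ) with hp
      have pinj : Function.Injective p := fun i j hij => by
        have := Subtype.coe_injective hij
        exact e.symm.injective this
      have pmem : ∀ i, p i ∈ G ∧ (p i).im = y := by
        intro i
        have : (p i) ∈ (G ∩ {z : ℂ | z.im = y}) := hs (e.symm i).2
        exact ⟨this.1, this.2⟩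
      -- find separation
      rcases (Finset.filter (fun q : Fin m × Fin m => q.1 ≠ q.2) Finset.univ).eq_empty_or_nonempty
        with hSe | hSne
      · refine mem_iUnion.mpr ⟨0, p, pmem, fun i j hij => ?_⟩
        have : (i, j) ∈ Finset.filter (fun q : Fin m × Fin m => q.1 ≠ q.2) Finset.univ :=
          Finset.mem_filter.mpr ⟨Finset.mem_univ _, hij⟩
        rw [hSe] at this
        exact absurd this (Finset.notMem_empty _)
      · have hδ₀pos : 0 < (Finset.filter (fun q : Fin m × Fin m => q.1 ≠ q.2)
            Finset.univ).inf' hSne (fun q => dist (p q.1) (p q.2)) := by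
          rw [Finset.lt_inf'_iff]
          intro q hq
          exact dist_pos.mpr fun h => (Finset.mem_filter.mp hq).2 (pinj h)
        set δ₀ := (Finset.filter (fun q : Fin m × Fin m => q.1 ≠ q.2)
            Finset.univ).inf' hSne (fun q => dist (p q.1) (p q.2)) with hδ₀
        obtain ⟨k, hk⟩ := exists_nat_gt (1 / δ₀)
        refine mem_iUnion.mpr ⟨k, p, pmem, fun i j hij => ?_⟩
        have h1 : (1 : ℝ)/(k+1) ≤ δ₀ := by
          rw [div_le_iff₀ (by positivity)]
          rw [div_lt_iff₀ hδ₀pos] at hk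
          nlinarith
        have hmem : (i, j) ∈ Finset.filter (fun q : Fin m × Fin m => q.1 ≠ q.2) Finset.univ :=
          Finset.mem_filter.mpr ⟨Finset.mem_univ _, hij⟩
        exact h1.trans (hδ₀ ▸ Finset.inf'_le (fun q : Fin m × Fin m => dist (p q.1) (p q.2)) hmem)
    have hmono : ∀ m, Monotone (A m) := by
      intro m k₁ k₂ hk
      rintro y ⟨p, hp, hsep⟩
      refine ⟨p, hp, fun i j hij => le_trans ?_ (hsep i j hij)⟩
      apply one_div_le_one_div_of_le (by positivity)
      have : (k₁ : ℝ) ≤ k₂ := by exact_mod_cast hk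
      linarith
    have hbound : ∀ m : ℕ, (m : ℝ≥0∞) *
        MeasureTheory.volume {y : ℝ | ¬(G ∩ {z : ℂ | z.im = y}).Countable} ≤
        (MeasureTheory.Measure.hausdorffMeasure 1 : MeasureTheory.Measure ℂ) G := by
      intro m
      calc (m : ℝ≥0∞) * MeasureTheory.volume {y : ℝ | ¬(G ∩ {z : ℂ | z.im = y}).Countable}
          ≤ (m : ℝ≥0∞) * MeasureTheory.volume (⋃ k, A m k) :=
            mul_le_mul_right (measure_mono (hsub m)) _
        _ = (m : ℝ≥0∞) * ⨆ k, MeasureTheory.volume (A m k) := by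
            rw [(hmono m).directed_le.measure_iUnion]
        _ = ⨆ k, (m : ℝ≥0∞) * MeasureTheory.volume (A m k) := by rw [ENNReal.mul_iSup]
        _ ≤ _ := by
            refine iSup_le fun k => key16 G m (1/(k+1)) (by positivity)
    by_contra hne
    -- find m with m * vol > μH G
    set v := MeasureTheory.volume {y : ℝ | ¬(G ∩ {z : ℂ | z.im = y}).Countable} with hv
    have hv0 : v ≠ 0 := hne
    set c := min v 1 with hc
    have hc0 : c ≠ 0 := (lt_min (pos_iff_ne_zero.mpr hv0) zero_lt_one).ne'
    have hctop : c ≠ ⊤ := ((min_le_right v 1).trans_lt ENNReal.one_lt_top).ne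
    obtain ⟨m, hm⟩ := ENNReal.exists_nat_gt (ENNReal.div_lt_top hGfin.ne hc0).ne
    have h1 : (MeasureTheory.Measure.hausdorffMeasure 1 : MeasureTheory.Measure ℂ) G < m * c := by
      rw [← ENNReal.div_lt_iff (Or.inl hc0) (Or.inl hctop)]
      exact hm
    have h2 : (m : ℝ≥0∞) * c ≤ (MeasureTheory.Measure.hausdorffMeasure 1 :
        MeasureTheory.Measure ℂ) G := by
      refine le_trans ?_ (hbound m)
      gcongr
      exact min_le_left _ _
    exact absurd h2 (not_le.mpr h1)
  filter_upwards [MeasureTheory.ae_all_iff.mpr key] with y hy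
  rw [iUnion_inter]
  exact countable_iUnion hy
end
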